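/- For all m ≥ 1 and k ≥ 1, the exponential generating function of the sequence (S^(m)(n,k))_{n≥k} equals (E_{m−1}(x) − 1)^k / k! as a formal power series over ℚ; that is, Σ_{n≥k} S^(m)(n,k) · x^n/n! = (E_{m−1}(x) − 1)^k / k!. In other words, the set-theoretically defined m-th order Stirling numbers coincide with Bell's generalized Stirling numbers ζ_n^(k,m) defined by these generating functions. -/

import Mathlib

/-- `m`-th order ("hyper") partitions of a finite set `s`:
a chain `(P₁, …, P_m)` where `P₁` is a partition of `s` and each `P_{j+1}`
is a partition of the set of blocks of `P_j`. For `m = 0` it is `s` itself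
(a single trivial object). -/
def HyperPartition : (m : ℕ) → {α : Type} → [DecidableEq α] → Finset α → Type
  | 0, _, _, _ => PUnit
  | m + 1, _, _, s => (P : Finpartition s) × HyperPartition m P.parts

/-- The number of blocks of the outermost partition of a hyper partition
(for `m = 0`, by convention, the cardinality of the underlying set). -/
def HyperPartition.outerBlocks :
    (m : ℕ) → {α : Type} → [DecidableEq α] → {s : Finset α} →
      HyperPartition m s → ℕ
  | 0, _, _, s, _ => s.card
  | 1, _, _, _, p => p.1.parts.card
  | m + 2, _, _, _, p => HyperPartition.outerBlocks (m + 1) p.2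

/-- `|℘ₙ^(m)|`: the number of `m`-th order partitions of an `n`-element set. -/
noncomputable def hyperBell (m n : ℕ) : ℕ :=
  Nat.card (HyperPartition m (Finset.univ : Finset (Fin n)))

/-- The `m`-th order Stirling number `S^(m)(n,k)`: the number of `m`-th order
partitions of an `n`-element set whose outermost partition has exactly `k` blocks. -/
noncomputable def hyperStirling (m n k : ℕ) : ℕ :=
  Nat.card {p : HyperPartition m (Finset.univ : Finset (Fin n)) //
    HyperPartition.outerBlocks m p = k}

/-- The ordinary Stirling number of the second kind `S(n,k)`: the number of
set partitions of an `n`-element set into exactly `k` blocks. -/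
noncomputable def stirling (n k : ℕ) : ℕ :=
  Nat.card {P : Finpartition (Finset.univ : Finset (Fin n)) // P.parts.card = k}

/-- Composition `f(g(x))` of formal power series (intended for `g` with zero
constant term, in which case `coeff n (g ^ i) = 0` for `i > n`). -/
noncomputable def psComp (f g : PowerSeries ℚ) : PowerSeries ℚ :=
  PowerSeries.mk fun n =>
    PowerSeries.coeff n
      (∑ i ∈ Finset.range (n + 1), PowerSeries.C (PowerSeries.coeff i f) * g ^ i)

/-- The iterated exponential series: `E₀ = exp x`, `E_{m+1} = exp (E_m - 1)`. -/
noncomputable def E : ℕ → PowerSeries ℚ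
  | 0 => PowerSeries.exp ℚ
  | m + 1 => psComp (PowerSeries.exp ℚ) (E m - 1)

/-- The `m`-th order Bell number `Bₙ^(m) = n! · [xⁿ] E_m(x)`. -/
noncomputable def bell (m n : ℕ) : ℚ :=
  (n.factorial : ℚ) * PowerSeries.coeff n (E m)

/-!
Sorting the `(m+1)`-th order partitions of a set by their first partition `P` gives
`S^(m+1)(s, k) = ∑_P S^(m)(P.parts, k)`, a sum that depends on `P` only through its number of
blocks. On the side of generating functions this is composition with `eˣ - 1`: ordered
partitions, counted by splitting off the first block, give `n! [xⁿ] (eˣ - 1)ʲ = j! S(n, j)`,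
hence `n! [xⁿ] F(eˣ - 1) = ∑ⱼ S(n, j) j! [xʲ] F`. Since `E_{m+1} - 1 = (eˣ - 1) ∘ (E_m - 1)`
by definition, associativity of composition gives `E_{m+1} - 1 = (E_m - 1) ∘ (eˣ - 1)`, which
closes the induction on `m`.
-/

open PowerSeries Finset Function
open scoped Nat

section Coefficients

variable {R : Type*} [CommRing R]

theorem PowerSeries.coeff_pow_eq_zero_of_lt {g : R⟦X⟧} (hg : constantCoeff g = 0) {i n : ℕ}
    (h : n < i) : coeff n (g ^ i) = 0 :=
  coeff_of_lt_order n <| (Nat.cast_lt.2 h).trans_le (le_order_pow_of_constantCoeff_eq_zero i hg)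

theorem PowerSeries.coeff_subst_eq_sum_range {g : R⟦X⟧} (hg : constantCoeff g = 0)
    (f : R⟦X⟧) (n : ℕ) :
    coeff n (f.subst g) = ∑ i ∈ range (n + 1), coeff i f * coeff n (g ^ i) := by
  rw [coeff_subst' (HasSubst.of_constantCoeff_zero' hg)]
  refine finsum_eq_sum_of_support_subset _ fun i hi => ?_
  by_contra hi'
  simp only [coe_range, Set.mem_Iio, not_lt] at hi'
  exact hi (by simp [coeff_pow_eq_zero_of_lt hg hi'])

theorem PowerSeries.factorial_mul_coeff_mul_eq_sum_powerset {α : Type*} [DecidableEq α]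
    (f g : R⟦X⟧) (s : Finset α) :
    (#s)! * coeff #s (f * g) =
      ∑ b ∈ s.powerset, ((#b)! * coeff #b f) * ((#(s \ b))! * coeff #(s \ b) g) := by
  have hcard : ∀ b ∈ s.powerset, #(s \ b) = #s - #b := fun b hb =>
    card_sdiff_of_subset (mem_powerset.1 hb)
  rw [sum_congr rfl fun b hb => by rw [hcard b hb],
    sum_powerset_apply_card (fun j => (j ! * coeff j f) * ((#s - j)! * coeff (#s - j) g)),
    coeff_mul, Nat.sum_antidiagonal_eq_sum_range_succ_mk, mul_sum]
  refine sum_congr rfl fun j hj => ?_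
  have hfac := Nat.choose_mul_factorial_mul_factorial (Nat.lt_succ_iff.1 (mem_range.1 hj))
  rw [nsmul_eq_mul, ← hfac]
  push_cast
  ring

end Coefficients

theorem psComp_eq_subst (f : ℚ⟦X⟧) {g : ℚ⟦X⟧} (hg : constantCoeff g = 0) :
    psComp f g = f.subst g := by
  ext n
  simp [psComp, coeff_subst_eq_sum_range hg, coeff_C_mul]

theorem constantCoeff_E_sub_one (m : ℕ) : constantCoeff (E m - 1) = 0 := by
  cases m with
  | zero => simp [E]
  | succ m =>
    rw [map_sub, ← coeff_zero_eq_constantCoeff_apply]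
    simp [E, psComp, coeff_C_mul]

theorem E_succ_sub_one (m : ℕ) : E (m + 1) - 1 = (exp ℚ - 1).subst (E m - 1) := by
  rw [E, psComp_eq_subst _ (constantCoeff_E_sub_one m),
    subst_sub (HasSubst.of_constantCoeff_zero' (constantCoeff_E_sub_one m))]
  congr 1
  rw [← coe_substAlgHom (HasSubst.of_constantCoeff_zero' (constantCoeff_E_sub_one m)), map_one]

theorem constantCoeff_exp_sub_one : constantCoeff (exp ℚ - 1) = 0 := by simp

theorem E_succ_sub_one_eq_subst_exp (m : ℕ) :
    E (m + 1) - 1 = (E m - 1).subst (exp ℚ - 1) := by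
  induction m with
  | zero => rw [E_succ_sub_one]; rfl
  | succ m ih =>
    rw [E_succ_sub_one, ih, ← subst_comp_subst_apply
      (HasSubst.of_constantCoeff_zero' (constantCoeff_E_sub_one m))
      (HasSubst.of_constantCoeff_zero' constantCoeff_exp_sub_one), ← E_succ_sub_one, ih]

theorem coeff_E_succ_sub_one_pow (m k n : ℕ) :
    coeff n ((E (m + 1) - 1) ^ k) =
      ∑ j ∈ range (n + 1), coeff j ((E m - 1) ^ k) * coeff n ((exp ℚ - 1) ^ j) := by
  rw [E_succ_sub_one_eq_subst_exp,
    ← subst_pow (HasSubst.of_constantCoeff_zero' constantCoeff_exp_sub_one),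
    coeff_subst_eq_sum_range constantCoeff_exp_sub_one]

theorem factorial_mul_coeff_exp_sub_one {n : ℕ} (hn : n ≠ 0) :
    (n ! : ℚ) * coeff n (exp ℚ - 1) = 1 := by
  simp [coeff_one, hn, Nat.factorial_ne_zero]

theorem Fin.pairwise_disjoint_cons {β : Type*} [PartialOrder β] [OrderBot β] {k : ℕ}
    (b : β) (A : Fin k → β) :
    Pairwise (Disjoint on (Fin.cons b A : Fin (k + 1) → β)) ↔
      (∀ i, Disjoint b (A i)) ∧ Pairwise (Disjoint on A) := by
  simp only [Pairwise, Fin.forall_fin_succ, onFun, Fin.cons_zero, Fin.cons_succ, ne_eq,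
    Fin.succ_ne_zero, (Fin.succ_ne_zero _).symm, Fin.succ_inj, disjoint_comm (a := A _) (b := b)]
  grind

theorem Nat.card_equiv_fin {β : Type*} [Finite β] (k : ℕ) :
    Nat.card (Fin k ≃ β) = if Nat.card β = k then k ! else 0 := by
  split_ifs with h
  · rw [Nat.card_congr ((Finite.equivFinOfCardEq h).equivCongr (Equiv.refl _)).symm,
      Nat.card_perm, h]
  · have : IsEmpty (Fin k ≃ β) := ⟨fun e => h (by rw [← Nat.card_congr e, Nat.card_fin])⟩
    exact Nat.card_of_isEmpty

section SetPartition

variable {α : Type*} [DecidableEq α]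

theorem Fin.sup_univ_cons {k : ℕ} (b : Finset α) (A : Fin k → Finset α) :
    univ.sup (Fin.cons b A : Fin (k + 1) → Finset α) = b ∪ univ.sup A := by
  rw [Fin.univ_succ, sup_cons, sup_map]; rfl

def IsOrderedPartition (s : Finset α) {k : ℕ} (A : Fin k → Finset α) : Prop :=
  (∀ i, (A i).Nonempty) ∧ Pairwise (Disjoint on A) ∧ univ.sup A = s

theorem isOrderedPartition_cons {s b : Finset α} {k : ℕ} {A : Fin k → Finset α} :
    IsOrderedPartition s (Fin.cons b A : Fin (k + 1) → Finset α) ↔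
      b.Nonempty ∧ b ⊆ s ∧ IsOrderedPartition (s \ b) A := by
  simp only [IsOrderedPartition, Fin.forall_fin_succ, Fin.cons_zero, Fin.cons_succ,
    Fin.pairwise_disjoint_cons, Fin.sup_univ_cons]
  constructor
  · rintro ⟨⟨hb, hA⟩, ⟨hbA, hdisj⟩, rfl⟩
    refine ⟨hb, subset_union_left, hA, hdisj, ?_⟩
    rw [union_sdiff_cancel_left (Finset.disjoint_sup_right.2 fun i _ => hbA i)]
  · rintro ⟨hb, hbs, hA, hdisj, hsup⟩
    have hsub : ∀ i, A i ⊆ s \ b := fun i => hsup ▸ le_sup (mem_univ i)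
    exact ⟨⟨hb, hA⟩, ⟨fun i => disjoint_of_subset_right (hsub i) disjoint_sdiff, hdisj⟩,
      by rw [hsup, union_sdiff_of_subset hbs]⟩

def OrderedPartition (k : ℕ) (s : Finset α) : Type _ :=
  {A : Fin k → Finset α // IsOrderedPartition s A}

def OrderedPartition.consEquiv (k : ℕ) (s : Finset α) :
    OrderedPartition (k + 1) s ≃ Σ b : s.powerset.erase ∅, OrderedPartition k (s \ b) where
  toFun A :=
    have h := isOrderedPartition_cons.1 ((Fin.cons_self_tail A.1).symm ▸ A.2)
    ⟨⟨A.1 0, mem_erase.2 ⟨h.1.ne_empty, mem_powerset.2 h.2.1⟩⟩, ⟨Fin.tail A.1, h.2.2⟩⟩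
  invFun b :=
    have hb := mem_erase.1 b.1.2
    ⟨Fin.cons b.1.1 b.2.1, isOrderedPartition_cons.2
      ⟨nonempty_iff_ne_empty.2 hb.1, mem_powerset.1 hb.2, b.2.2⟩⟩
  left_inv A := Subtype.ext (Fin.cons_self_tail A.1)
  right_inv _ := rfl

namespace OrderedPartition

variable {k : ℕ} {s : Finset α}

theorem injective (A : OrderedPartition k s) : Injective A.1 := fun i j hij => by
  by_contra hne
  have hdisj : Disjoint (A.1 i) (A.1 j) := A.2.2.1 hne
  rw [hij, disjoint_self, bot_eq_empty] at hdisj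
  exact (A.2.1 j).ne_empty hdisj

def toFinpartition (A : OrderedPartition k s) : Finpartition s where
  parts := univ.image A.1
  supIndep := by
    rw [supIndep_iff_pairwiseDisjoint]
    intro x hx y hy hxy
    obtain ⟨i, -, rfl⟩ := mem_image.1 hx
    obtain ⟨j, -, rfl⟩ := mem_image.1 hy
    exact A.2.2.1 (ne_of_apply_ne _ hxy)
  sup_parts := by rw [sup_image]; exact A.2.2.2
  bot_notMem h := by
    obtain ⟨i, -, hi⟩ := mem_image.1 h
    exact (A.2.1 i).ne_empty hi

theorem mem_parts_iff_of_toFinpartition_eq {A : OrderedPartition k s} {P : Finpartition s}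
    (h : A.toFinpartition = P) {b : Finset α} : b ∈ P.parts ↔ ∃ i, A.1 i = b := by
  subst h; simp [toFinpartition]

theorem isOrderedPartition_of_equiv (P : Finpartition s) (e : Fin k ≃ P.parts) :
    IsOrderedPartition s fun i => (e i : Finset α) := by
  have himage : univ.image (fun i => (e i : Finset α)) = P.parts := by
    ext b; simp [e.exists_congr_left]
  refine ⟨fun i => P.nonempty_of_mem_parts (e i).2, fun i j hij => ?_, ?_⟩
  · exact P.disjoint (e i).2 (e j).2 fun h => hij (e.injective (Subtype.ext h))
  · have hsup := P.sup_parts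
    rwa [← himage, sup_image] at hsup

noncomputable def fiberEquiv (P : Finpartition s) :
    {A : OrderedPartition k s // A.toFinpartition = P} ≃ (Fin k ≃ P.parts) where
  toFun A := Equiv.ofBijective
    (fun i => ⟨A.1.1 i, (mem_parts_iff_of_toFinpartition_eq A.2).2 ⟨i, rfl⟩⟩)
    ⟨fun i j hij => A.1.injective (congrArg Subtype.val hij), fun b => by
      obtain ⟨i, hi⟩ := (mem_parts_iff_of_toFinpartition_eq A.2).1 b.2
      exact ⟨i, Subtype.ext hi⟩⟩
  invFun e := ⟨⟨_, isOrderedPartition_of_equiv P e⟩,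
    Finpartition.ext (by ext b; simp [toFinpartition, e.exists_congr_left])⟩
  left_inv _ := rfl
  right_inv _ := Equiv.ext fun _ => rfl

instance : Finite (OrderedPartition k s) :=
  have (P : Finpartition s) : Finite {A : OrderedPartition k s // A.toFinpartition = P} :=
    .of_equiv _ (fiberEquiv P).symm
  .of_equiv _ (Equiv.sigmaFiberEquiv toFinpartition)

theorem card_eq_factorial_mul (k : ℕ) (s : Finset α) :
    Nat.card (OrderedPartition k s) = k ! * #{P : Finpartition s | #P.parts = k} := by
  rw [← Nat.card_congr (Equiv.sigmaFiberEquiv toFinpartition), Nat.card_sigma]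
  simp only [fun P => (Nat.card_congr (fiberEquiv (k := k) P)).trans (Nat.card_equiv_fin k),
    Nat.card_eq_finsetCard]
  rw [← sum_filter, sum_const, smul_eq_mul, mul_comm]

theorem card_zero (s : Finset α) : Nat.card (OrderedPartition 0 s) = if s = ∅ then 1 else 0 := by
  have hiff (A : Fin 0 → Finset α) : IsOrderedPartition s A ↔ s = ∅ := by
    simp [IsOrderedPartition, Pairwise, eq_comm]
  split_ifs with hs
  · exact Nat.card_eq_one_iff_exists.2
      ⟨⟨finZeroElim, (hiff _).2 hs⟩, fun A => Subtype.ext (funext finZeroElim)⟩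
  · have : IsEmpty (OrderedPartition 0 s) := ⟨fun A => hs ((hiff _).1 A.2)⟩
    exact Nat.card_of_isEmpty

theorem natCast_card_eq_factorial_mul_coeff (k : ℕ) (s : Finset α) :
    (Nat.card (OrderedPartition k s) : ℚ) = (#s)! * coeff #s ((exp ℚ - 1) ^ k) := by
  induction k generalizing s with
  | zero => simp +contextual [card_zero, coeff_one]
  | succ k ih =>
    have hweight (b : Finset α) (hb : b ∈ s.powerset.erase ∅) :
        (Nat.card (OrderedPartition k (s \ b)) : ℚ) =
          ((#b)! * coeff #b (exp ℚ - 1)) * ((#(s \ b))! * coeff #(s \ b) ((exp ℚ - 1) ^ k)) := by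
      rw [factorial_mul_coeff_exp_sub_one (card_ne_zero.2 (nonempty_iff_ne_empty.2
        (mem_erase.1 hb).1)), one_mul, ih]
    rw [Nat.card_congr (consEquiv k s), Nat.card_sigma, Nat.cast_sum,
      sum_coe_sort (s.powerset.erase ∅) fun b => (Nat.card (OrderedPartition k (s \ b)) : ℚ),
      sum_congr rfl hweight, sum_erase _ (by simp), pow_succ', factorial_mul_coeff_mul_eq_sum_powerset]

end OrderedPartition

theorem factorial_mul_coeff_exp_sub_one_pow (k : ℕ) (s : Finset α) :
    ((#s)! : ℚ) * coeff #s ((exp ℚ - 1) ^ k) = k ! * #{P : Finpartition s | #P.parts = k} := by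
  rw [← OrderedPartition.natCast_card_eq_factorial_mul_coeff,
    OrderedPartition.card_eq_factorial_mul, Nat.cast_mul]

theorem Finpartition.sum_comp_card_parts {M : Type*} [AddCommMonoid M] (s : Finset α)
    (g : ℕ → M) :
    ∑ P : Finpartition s, g #P.parts =
      ∑ j ∈ range (#s + 1), #{P : Finpartition s | #P.parts = j} • g j := by
  rw [← sum_fiberwise_of_maps_to' (t := range (#s + 1))
    fun P _ => mem_range.2 (Nat.lt_succ_of_le P.card_parts_le_card)]
  simp only [sum_const]

end SetPartition

namespace HyperPartition

variable {α : Type} [DecidableEq α]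

instance finite : (m : ℕ) → {α : Type} → [DecidableEq α] → (s : Finset α) →
    Finite (HyperPartition m s)
  | 0, _, _, _ => inferInstanceAs (Finite PUnit)
  | m + 1, _, _, s =>
    have (P : Finpartition s) := finite m P.parts
    inferInstanceAs (Finite (Σ P : Finpartition s, HyperPartition m P.parts))

theorem outerBlocks_succ (m : ℕ) {s : Finset α} (P : Finpartition s)
    (q : HyperPartition m P.parts) : outerBlocks (m + 1) ⟨P, q⟩ = outerBlocks m q := by
  cases m <;> rfl

end HyperPartition

section HyperPartitionCount

variable {α : Type} [DecidableEq α]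

-- Counting over an arbitrary finset rather than `Fin n` lets the recursion pass to the set of
-- blocks `P.parts` without relabelling it.
noncomputable def hyperPartitionCount (m : ℕ) (s : Finset α) (k : ℕ) : ℕ :=
  Nat.card {p : HyperPartition m s // HyperPartition.outerBlocks m p = k}

theorem hyperStirling_eq_hyperPartitionCount (m n k : ℕ) :
    hyperStirling m n k = hyperPartitionCount m (univ : Finset (Fin n)) k :=
  rfl

theorem hyperPartitionCount_zero (s : Finset α) (k : ℕ) :
    hyperPartitionCount 0 s k = if #s = k then 1 else 0 := by
  change Nat.card {_p : PUnit // #s = k} = _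
  split_ifs <;> simp [*]

theorem hyperPartitionCount_succ (m : ℕ) (s : Finset α) (k : ℕ) :
    hyperPartitionCount (m + 1) s k = ∑ P : Finpartition s, hyperPartitionCount m P.parts k := by
  let e : {p : HyperPartition (m + 1) s // HyperPartition.outerBlocks (m + 1) p = k} ≃
      Σ P : Finpartition s, {q : HyperPartition m P.parts // HyperPartition.outerBlocks m q = k} :=
    { toFun p := ⟨p.1.1, p.1.2, (HyperPartition.outerBlocks_succ m _ _).symm.trans p.2⟩
      invFun q := ⟨⟨q.1, q.2.1⟩, (HyperPartition.outerBlocks_succ m _ _).trans q.2.2⟩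
      left_inv _ := rfl
      right_inv _ := rfl }
  rw [hyperPartitionCount, Nat.card_congr e, Nat.card_sigma]
  rfl

theorem hyperPartitionCount_one (s : Finset α) (k : ℕ) :
    hyperPartitionCount 1 s k = #{P : Finpartition s | #P.parts = k} := by
  simp [hyperPartitionCount_succ, hyperPartitionCount_zero]

theorem factorial_mul_hyperPartitionCount (m : ℕ) (s : Finset α) (k : ℕ) :
    (k ! : ℚ) * hyperPartitionCount (m + 1) s k = (#s)! * coeff #s ((E m - 1) ^ k) := by
  induction m generalizing α with
  | zero => rw [hyperPartitionCount_one, ← factorial_mul_coeff_exp_sub_one_pow]; rfl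
  | succ m ih =>
    calc (k ! : ℚ) * hyperPartitionCount (m + 2) s k
        = ∑ P : Finpartition s, ((#P.parts)! : ℚ) * coeff #P.parts ((E m - 1) ^ k) := by
          simp only [hyperPartitionCount_succ (m + 1), Nat.cast_sum, mul_sum, ih]
      _ = ∑ j ∈ range (#s + 1), #{P : Finpartition s | #P.parts = j} •
            ((j ! : ℚ) * coeff j ((E m - 1) ^ k)) :=
          Finpartition.sum_comp_card_parts s fun j => (j ! : ℚ) * coeff j ((E m - 1) ^ k)
      _ = (#s)! * coeff #s ((E (m + 1) - 1) ^ k) := by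
          rw [coeff_E_succ_sub_one_pow, mul_sum]
          refine sum_congr rfl fun j _ => ?_
          rw [nsmul_eq_mul, mul_left_comm ((#s)! : ℚ), factorial_mul_coeff_exp_sub_one_pow]
          ring

end HyperPartitionCount

theorem stmt6_general (m k : ℕ) (hm : 1 ≤ m) :
    (PowerSeries.mk fun n =>
        if k ≤ n then (hyperStirling m n k : ℚ) / n.factorial else 0) =
      (k.factorial : ℚ)⁻¹ • (E (m - 1) - 1) ^ k := by
  obtain ⟨m, rfl⟩ := Nat.exists_eq_add_of_le' hm
  ext n
  rw [coeff_mk, coeff_smul, Nat.add_sub_cancel, smul_eq_mul]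
  split_ifs with hkn
  · have hcount := factorial_mul_hyperPartitionCount m (univ : Finset (Fin n)) k
    rw [card_univ, Fintype.card_fin] at hcount
    rw [hyperStirling_eq_hyperPartitionCount, eq_inv_mul_iff_mul_eq₀ (by positivity), ← mul_div_assoc, hcount]
    field_simp
  · rw [coeff_pow_eq_zero_of_lt (constantCoeff_E_sub_one m) (not_le.1 hkn), mul_zero]

/-- `Σ_{n≥k} S^(m)(n,k) xⁿ/n! = (E_{m−1}(x) − 1)^k / k!` as formal power
series over `ℚ`; i.e. `S^(m)(n,k)` coincides with Bell's generalized Stirling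
number `ζₙ^(k,m)`. -/
theorem stmt6 (m k : ℕ) (hm : 1 ≤ m) (hk : 1 ≤ k) :
    (PowerSeries.mk fun n =>
        if k ≤ n then (hyperStirling m n k : ℚ) / n.factorial else 0) =
      (k.factorial : ℚ)⁻¹ • (E (m - 1) - 1) ^ k :=
  stmt6_general m k hm
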